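/- Suppose α is an additively closed ordinal with α < ϑ(ε_{Ω+1}). Then α can be uniquely written as α = ϑ(β), where either β = 0, or β = Ω^{β₁}·γ₁ + … + Ω^{βₙ}·γₙ < ε_{Ω+1} in base-Ω Cantor normal form with β > β₁ > … > βₙ and 0 < γᵢ < Ω, and k(β) < α. -/

import Mathlib

/-- `Ω`, the first uncountable ordinal `ω₁`. -/
noncomputable def Omega1 : Ordinal.{0} := (Cardinal.aleph 1).ord

/-- `KMem β α` expresses `β ∈ K(α)`, where `K(0) = {0}` and, for
`α = Ω^{α₁}·β₁ + … + Ω^{αₙ}·βₙ` in base-`Ω` Cantor normal form,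
`K(α) = {β₁,…,βₙ} ∪ K(α₁) ∪ … ∪ K(αₙ)`. -/
inductive KMem : Ordinal.{0} → Ordinal.{0} → Prop
  | zero : KMem 0 0
  | coeff {α e c : Ordinal.{0}} : (e, c) ∈ Ordinal.CNF Omega1 α → KMem c α
  | expo {α e c β : Ordinal.{0}} : (e, c) ∈ Ordinal.CNF Omega1 α → KMem β e → KMem β α

/-- `k(α) = max K(α)` (as a supremum; `K(α)` is finite for `α < ε_{Ω+1}`). -/
noncomputable def kMax (α : Ordinal.{0}) : Ordinal.{0} := sSup {β | KMem β α}

/-- Membership in `P`, the class of additively closed ordinals `{ω^ξ : ξ ∈ On}`. -/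
def AddClosed (ζ : Ordinal.{0}) : Prop := ∃ ξ : Ordinal.{0}, ζ = Ordinal.omega0 ^ ξ

/-- The collapsing function `ϑ`: `ϑ(α)` is the least `ζ ∈ P` such that `k(α) < ζ` and
for all `β < α` with `k(β) < ζ` one has `ϑ(β) < ζ`. -/
noncomputable def theta : Ordinal.{0} → Ordinal.{0} :=
  Ordinal.lt_wf.fix (C := fun _ => Ordinal.{0}) fun α IH =>
    sInf {ζ : Ordinal.{0} | AddClosed ζ ∧ kMax α < ζ ∧
      ∀ (β : Ordinal.{0}) (h : β < α), kMax β < ζ → IH β h < ζ}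

/-- `ε_{Ω+1}`, the least epsilon number above `Ω`. -/
noncomputable def epsOmega1 : Ordinal.{0} :=
  Ordinal.nfp (fun a => Ordinal.omega0 ^ a) (Omega1 + 1)

/-- The tower `Ω_n[1]`: `Ω_0[1] = 1` and `Ω_{n+1}[1] = Ω ^ Ω_n[1]`. -/
noncomputable def OmegaTower : ℕ → Ordinal.{0}
  | 0 => 1
  | nn + 1 => Omega1 ^ OmegaTower nn

/-- The Howard–Bachmann ordinal `ϑ(ε_{Ω+1}) = sup_{n<ω} ϑ(Ω_n[1])`. -/
noncomputable def HowardBachmann : Ordinal.{0} := ⨆ nn : ℕ, theta (OmegaTower nn)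

/-!
If `k(β) < α < ϑ(β)` with `α ∈ P`, then `α` fails the definition of `ϑ(β)`, which can only be
because some `γ < β` with `k(γ) < α` has `α ≤ ϑ(γ)`; well-founded descent on `β` ends at some
`α = ϑ(γ)` with `k(γ) < α`. The descent starts from `β = Ω_n[1]`, where `k(β) ≤ 1` (or from
`β = 0` when `α = ϑ(0) = 1`). Uniqueness holds because `ϑ` is injective: for `γ < β`,
`k(γ) < ϑ(γ) = ϑ(β)` would force `ϑ(γ) < ϑ(β)`. Below `Ω_n[1]` we have `γ < Ω^γ`, so every
exponent in the base-`Ω` normal form of `γ` is smaller than `γ`.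
-/

open Ordinal

lemma Omega1_eq_omega_one : Omega1 = ω_ 1 := Cardinal.ord_aleph 1

lemma one_lt_Omega1 : 1 < Omega1 :=
  Omega1_eq_omega_one ▸ one_lt_omega0.trans_le (omega0_le_omega 1)

lemma Omega1_pos : 0 < Omega1 := zero_lt_one.trans one_lt_Omega1

lemma AddClosed.pos {α : Ordinal.{0}} (h : AddClosed α) : 0 < α := by
  obtain ⟨ξ, rfl⟩ := h
  exact opow_pos ξ omega0_pos

section CNF

lemma CNF_opow_self {b : Ordinal} (hb : 1 < b) (t : Ordinal) : CNF b (b ^ t) = [(t, 1)] := by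
  simpa [CNF.zero_right] using
    CNF.opow_mul_add (e := t) (y := 0) hb one_ne_zero hb (opow_pos t (zero_lt_one.trans hb))

lemma CNF_fst_lt_of_lt_opow {b o : Ordinal} (hb : 1 < b) (ho : o < b ^ o)
    {x : Ordinal × Ordinal} (hx : x ∈ CNF b o) : x.1 < o := by
  have ho0 : o ≠ 0 := by
    rintro rfl
    simp [CNF.zero_right] at hx
  exact (CNF.fst_le_log hx).trans_lt ((lt_opow_iff_log_lt' hb ho0).1 ho)

end CNF

section Epsilon

lemma opow_lt_of_omega0_opow_eq {ε b x : Ordinal} (hε : ω ^ ε = ε) (hb : b < ε) (hx : x < ε) :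
    b ^ x < ε := by
  have hmul : IsPrincipal (· * ·) ε := by
    simpa only [hε] using isPrincipal_mul_omega0_opow_opow ε
  calc b ^ x ≤ (ω ^ b) ^ x := opow_le_opow_left x (right_le_opow b one_lt_omega0)
    _ = ω ^ (b * x) := (opow_mul ω b x).symm
    _ < ω ^ ε := (opow_lt_opow_iff_right one_lt_omega0).2 (hmul hb hx)
    _ = ε := hε

lemma omega0_opow_epsOmega1 : ω ^ epsOmega1 = epsOmega1 :=
  nfp_fp (isNormal_opow one_lt_omega0) (Omega1 + 1)

lemma Omega1_lt_epsOmega1 : Omega1 < epsOmega1 :=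
  (Order.lt_add_one_iff.2 le_rfl).trans_le (le_nfp _ _)

lemma OmegaTower_lt_epsOmega1 (n : ℕ) : OmegaTower n < epsOmega1 := by
  induction n with
  | zero => exact one_lt_Omega1.trans Omega1_lt_epsOmega1
  | succ n ih => exact opow_lt_of_omega0_opow_eq omega0_opow_epsOmega1 Omega1_lt_epsOmega1 ih

lemma OmegaTower_lt_succ (n : ℕ) : OmegaTower n < OmegaTower (n + 1) := by
  induction n with
  | zero => simpa [OmegaTower] using one_lt_Omega1
  | succ n ih => exact (opow_lt_opow_iff_right one_lt_Omega1).2 ih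

lemma lt_Omega1_opow_of_lt_OmegaTower {γ : Ordinal.{0}} (n : ℕ) (h : γ < OmegaTower n) :
    γ < Omega1 ^ γ := by
  induction n with
  | zero =>
    rw [OmegaTower, Order.lt_one_iff] at h
    simp [h]
  | succ n ih =>
    rcases lt_or_ge γ (OmegaTower n) with hγ | hγ
    · exact ih hγ
    · exact h.trans_le (opow_le_opow_right Omega1_pos hγ)

lemma CNF_Omega1_of_le_OmegaTower {γ : Ordinal.{0}} {n : ℕ} (h : γ ≤ OmegaTower n)
    {pr : Ordinal × Ordinal} (hpr : pr ∈ CNF Omega1 γ) :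
    pr.1 < γ ∧ 0 < pr.2 ∧ pr.2 < Omega1 :=
  ⟨CNF_fst_lt_of_lt_opow one_lt_Omega1
      (lt_Omega1_opow_of_lt_OmegaTower (n + 1) (h.trans_lt (OmegaTower_lt_succ n))) hpr,
    CNF.snd_pos hpr, CNF.snd_lt one_lt_Omega1 hpr⟩

end Epsilon

section KMax

lemma eq_zero_of_kMem_zero {x : Ordinal.{0}} (h : KMem x 0) : x = 0 := by
  cases h with
  | zero => rfl
  | coeff hm => simp [CNF.zero_right] at hm
  | expo hm => simp [CNF.zero_right] at hm

lemma kMax_zero : kMax 0 = 0 := by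
  have : {β : Ordinal.{0} | KMem β 0} = {0} :=
    Set.ext fun _ => ⟨eq_zero_of_kMem_zero, fun h => h ▸ KMem.zero⟩
  rw [kMax, this, csSup_singleton]

lemma kMem_Omega1_opow {x t : Ordinal.{0}} (h : KMem x (Omega1 ^ t)) : x = 1 ∨ KMem x t := by
  generalize hq : Omega1 ^ t = q at h
  cases h with
  | zero => exact absurd hq (opow_pos t Omega1_pos).ne'
  | coeff hm =>
    subst hq
    rw [CNF_opow_self one_lt_Omega1, List.mem_singleton, Prod.mk.injEq] at hm
    exact Or.inl hm.2
  | expo hm hk =>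
    subst hq
    rw [CNF_opow_self one_lt_Omega1, List.mem_singleton, Prod.mk.injEq] at hm
    exact Or.inr (hm.1 ▸ hk)

lemma le_one_of_kMem_OmegaTower {x : Ordinal.{0}} (n : ℕ) (h : KMem x (OmegaTower n)) :
    x ≤ 1 := by
  induction n with
  | zero =>
    rw [OmegaTower, ← opow_zero Omega1] at h
    rcases kMem_Omega1_opow h with rfl | h0
    · exact le_rfl
    · exact (eq_zero_of_kMem_zero h0).trans_le zero_le_one
  | succ n ih =>
    rcases kMem_Omega1_opow h with rfl | h'
    · exact le_rfl
    · exact ih h'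

lemma kMax_OmegaTower_le_one (n : ℕ) : kMax (OmegaTower n) ≤ 1 :=
  csSup_le' fun _ => le_one_of_kMem_OmegaTower n

end KMax

section Theta

def thetaSet (β : Ordinal.{0}) : Set Ordinal.{0} :=
  {ζ | AddClosed ζ ∧ kMax β < ζ ∧ ∀ γ < β, kMax γ < ζ → theta γ < ζ}

lemma theta_eq_sInf (β : Ordinal.{0}) : theta β = sInf (thetaSet β) := by
  rw [theta, WellFounded.fix_eq]
  rfl

lemma thetaSet_nonempty (β : Ordinal.{0}) : (thetaSet β).Nonempty := by
  set M := max (kMax β) (sSup (theta '' Set.Iio β))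
  have hM : M < ω ^ Order.succ M := (Order.lt_succ M).trans_le (right_le_opow _ one_lt_omega0)
  refine ⟨ω ^ Order.succ M, ⟨_, rfl⟩, (le_max_left _ _).trans_lt hM, fun γ hγ _ => ?_⟩
  have hθ : theta γ ≤ sSup (theta '' Set.Iio β) := le_csSup bddAbove_of_small ⟨γ, hγ, rfl⟩
  exact (hθ.trans (le_max_right _ _)).trans_lt hM

lemma theta_mem_thetaSet (β : Ordinal.{0}) : theta β ∈ thetaSet β :=
  theta_eq_sInf β ▸ csInf_mem (thetaSet_nonempty β)

lemma theta_le_of_mem_thetaSet {β ζ : Ordinal.{0}} (h : ζ ∈ thetaSet β) : theta β ≤ ζ :=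
  theta_eq_sInf β ▸ csInf_le (OrderBot.bddBelow _) h

lemma kMax_lt_theta (β : Ordinal.{0}) : kMax β < theta β := (theta_mem_thetaSet β).2.1

lemma theta_lt_theta {γ β : Ordinal.{0}} (hγβ : γ < β) (hk : kMax γ < theta β) :
    theta γ < theta β :=
  (theta_mem_thetaSet β).2.2 γ hγβ hk

lemma theta_injective : Function.Injective theta := by
  have key : ∀ {γ β}, γ < β → theta γ ≠ theta β := fun hγβ h =>
    (theta_lt_theta hγβ (h ▸ kMax_lt_theta _)).ne h
  intro a b h
  by_contra hab
  rcases lt_or_gt_of_ne hab with hab | hab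
  exacts [key hab h, key hab h.symm]

lemma theta_zero : theta 0 = 1 := by
  refine le_antisymm (theta_le_of_mem_thetaSet ⟨⟨0, (opow_zero ω).symm⟩, ?_, by simp⟩) ?_
  · simp [kMax_zero]
  · simpa [kMax_zero, Order.one_le_iff_pos] using kMax_lt_theta 0

lemma exists_theta_eq_of_le_theta {α : Ordinal.{0}} (hP : AddClosed α) (β : Ordinal.{0})
    (hk : kMax β < α) (hle : α ≤ theta β) : ∃ γ ≤ β, kMax γ < α ∧ theta γ = α := by
  induction β using WellFoundedLT.induction with
  | _ β ih =>
  rcases hle.lt_or_eq with hlt | heq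
  · have hnot : α ∉ thetaSet β := fun hmem => (theta_le_of_mem_thetaSet hmem).not_gt hlt
    obtain ⟨γ, hγβ, hγk, hγθ⟩ : ∃ γ < β, kMax γ < α ∧ α ≤ theta γ := by
      simpa [thetaSet, hP, hk] using hnot
    obtain ⟨δ, hδγ, hδk, hδθ⟩ := ih γ hγβ hγk hγθ
    exact ⟨δ, hδγ.trans hγβ.le, hδk, hδθ⟩
  · exact ⟨β, le_rfl, hk, heq.symm⟩

end Theta

/-- every additively closed ordinal `α < ϑ(ε_{Ω+1})` is uniquely of the
form `ϑ(β)` with either `β = 0`, or `β ≠ 0`, `β < ε_{Ω+1}`, the base-`Ω` Cantor normal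
form of `β` has all exponents `< β` and coefficients in `(0, Ω)`, and `k(β) < α`. -/
theorem stmt19 (α : Ordinal.{0}) (hP : AddClosed α) (hα : α < HowardBachmann) :
    ∃! β : Ordinal.{0},
      (β = 0 ∨
        (β ≠ 0 ∧ β < epsOmega1 ∧
          (∀ pr ∈ Ordinal.CNF Omega1 β, pr.1 < β ∧ 0 < pr.2 ∧ pr.2 < Omega1) ∧
          kMax β < α)) ∧
      α = theta β := by
  obtain ⟨n, hn⟩ := Ordinal.lt_iSup_iff.1 hα
  obtain ⟨β, hβn, hβk, hβα⟩ : ∃ β ≤ OmegaTower n, kMax β < α ∧ α ≤ theta β := by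
    rcases eq_or_ne α 1 with rfl | hα1
    · exact ⟨0, zero_le, by simp [kMax_zero], theta_zero.ge⟩
    · have h1α : 1 < α := lt_of_le_of_ne (Order.one_le_iff_pos.2 hP.pos) hα1.symm
      exact ⟨_, le_rfl, (kMax_OmegaTower_le_one n).trans_lt h1α, hn.le⟩
  obtain ⟨γ, hγβ, hγk, hγα⟩ := exists_theta_eq_of_le_theta hP β hβk hβα
  have hγn := hγβ.trans hβn
  refine ⟨γ, ⟨?_, hγα.symm⟩, fun δ hδ => theta_injective (hδ.2.symm.trans hγα.symm)⟩
  rcases eq_or_ne γ 0 with hγ0 | hγ0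
  · exact Or.inl hγ0
  · exact Or.inr ⟨hγ0, hγn.trans_lt (OmegaTower_lt_epsOmega1 n),
      fun _ => CNF_Omega1_of_le_OmegaTower hγn, hγk⟩
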